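/- If y_{k+1} is a first-order associated function at a multiple eigenvalue λ_k and y_n is an eigenfunction for λ_n ≠ λ_k, with cλ_k+d ≠ 0 and cλ_n+d ≠ 0, then ∫₀¹ y_{k+1} y_n dx = -(ad-bc)·( y_{k+1}(1)/(cλ_k+d) - c·y_k(1)/(cλ_k+d)² ) · y_n(1)/(cλ_n+d). -/

import Mathlib

open MeasureTheory Set

/-- Lemma 3.1(a): inner product of the first associated function with an eigenfunction
for a different eigenvalue, case `λk ≠ -d/c ≠ λn`. -/
theorem assoc_inner_product
    (a b c d β : ℝ) (habcd : a * d - b * c < 0) (hac : a * c ≠ 0)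
    (hβ0 : 0 ≤ β) (hβπ : β < Real.pi)
    (q : ℝ → ℝ) (hq : ContinuousOn q (Icc (0:ℝ) 1))
    (lam lamn : ℝ) (hcd : c * lam + d ≠ 0) (hcdn : c * lamn + d ≠ 0) (hne : lamn ≠ lam)
    (y0 y0' y0'' y1 y1' y1'' : ℝ → ℝ)
    (hy0 : ∀ x ∈ Icc (0:ℝ) 1, HasDerivAt y0 (y0' x) x)
    (hy0' : ∀ x ∈ Icc (0:ℝ) 1, HasDerivAt y0' (y0'' x) x)
    (hy0'' : ContinuousOn y0'' (Icc (0:ℝ) 1))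
    (hy1 : ∀ x ∈ Icc (0:ℝ) 1, HasDerivAt y1 (y1' x) x)
    (hy1' : ∀ x ∈ Icc (0:ℝ) 1, HasDerivAt y1' (y1'' x) x)
    (hy1'' : ContinuousOn y1'' (Icc (0:ℝ) 1))
    (hode0 : ∀ x ∈ Icc (0:ℝ) 1, -y0'' x + q x * y0 x = lam * y0 x)
    (hode1 : ∀ x ∈ Icc (0:ℝ) 1, -y1'' x + q x * y1 x = lam * y1 x + y0 x)
    (hbc00 : y0 0 * Real.cos β = y0' 0 * Real.sin β)
    (hbc01 : y1 0 * Real.cos β = y1' 0 * Real.sin β)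
    (hbc10 : (a * lam + b) * y0 1 = (c * lam + d) * y0' 1)
    (hbc11 : (a * lam + b) * y1 1 + a * y0 1 = (c * lam + d) * y1' 1 + c * y0' 1)
    (yn yn' yn'' : ℝ → ℝ)
    (hyn : ∀ x ∈ Icc (0:ℝ) 1, HasDerivAt yn (yn' x) x)
    (hyn' : ∀ x ∈ Icc (0:ℝ) 1, HasDerivAt yn' (yn'' x) x)
    (hyn'' : ContinuousOn yn'' (Icc (0:ℝ) 1))
    (hoden : ∀ x ∈ Icc (0:ℝ) 1, -yn'' x + q x * yn x = lamn * yn x)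
    (hbc0n : yn 0 * Real.cos β = yn' 0 * Real.sin β)
    (hbc1n : (a * lamn + b) * yn 1 = (c * lamn + d) * yn' 1)
    :
    ∫ x in (0:ℝ)..1, y1 x * yn x
      = -(a * d - b * c) * (y1 1 / (c * lam + d) - c * y0 1 / (c * lam + d) ^ 2)
          * (yn 1 / (c * lamn + d)) := by

  have hs : lam - lamn ≠ 0 := sub_ne_zero_of_ne (Ne.symm hne)
  set F : ℝ → ℝ := fun x =>
      (lam - lamn) * (y1 x * yn' x - y1' x * yn x) - (y0 x * yn' x - y0' x * yn x) with hF
  have hderiv : ∀ x ∈ uIcc (0:ℝ) 1,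
      HasDerivAt F ((lam - lamn) ^ 2 * (y1 x * yn x)) x := by
    rw [uIcc_of_le (by norm_num : (0:ℝ) ≤ 1)]
    intro x hx
    have d1 := (((hy1 x hx).mul (hyn' x hx)).sub ((hy1' x hx).mul (hyn x hx))).const_mul
      (lam - lamn)
    have d0 := ((hy0 x hx).mul (hyn' x hx)).sub ((hy0' x hx).mul (hyn x hx))
    have hd := d1.sub d0
    refine hd.congr_deriv ?_
    symm
    have e1 := hode1 x hx
    have en := hoden x hx
    have e0 := hode0 x hx
    linear_combination ((lam - lamn) * y1 x - y0 x) * en - (lam - lamn) * yn x * e1 + yn x * e0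
  have hc1 : ContinuousOn y1 (Icc (0:ℝ) 1) := fun x hx =>
    (hy1 x hx).continuousAt.continuousWithinAt
  have hcn : ContinuousOn yn (Icc (0:ℝ) 1) := fun x hx =>
    (hyn x hx).continuousAt.continuousWithinAt
  have hint : IntervalIntegrable (fun x => (lam - lamn) ^ 2 * (y1 x * yn x)) volume 0 1 := by
    apply ContinuousOn.intervalIntegrable
    rw [uIcc_of_le (by norm_num : (0:ℝ) ≤ 1)]
    exact continuousOn_const.mul (hc1.mul hcn)
  have key := intervalIntegral.integral_eq_sub_of_hasDerivAt hderiv hint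
  rw [intervalIntegral.integral_const_mul] at key
  have hF0 : F 0 = 0 := by
    have hW : y1 0 * yn' 0 - y1' 0 * yn 0 = 0 := by
      linear_combination (Real.sin β * yn 0 + Real.cos β * yn' 0) * hbc01
        - (Real.sin β * y1 0 + Real.cos β * y1' 0) * hbc0n
        - (y1 0 * yn' 0 - y1' 0 * yn 0) * Real.sin_sq_add_cos_sq β
    have hG : y0 0 * yn' 0 - y0' 0 * yn 0 = 0 := by
      linear_combination (Real.sin β * yn 0 + Real.cos β * yn' 0) * hbc00
        - (Real.sin β * y0 0 + Real.cos β * y0' 0) * hbc0n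
        - (y0 0 * yn' 0 - y0' 0 * yn 0) * Real.sin_sq_add_cos_sq β
    simp only [hF]
    rw [hW, hG]
    ring
  -- solve for the endpoint derivative values
  have e0' : y0' 1 = (a * lam + b) * y0 1 / (c * lam + d) := by
    rw [eq_div_iff hcd]
    linarith [hbc10]
  have en' : yn' 1 = (a * lamn + b) * yn 1 / (c * lamn + d) := by
    rw [eq_div_iff hcdn]
    linarith [hbc1n]
  have e1' : y1' 1 = ((a * lam + b) * y1 1 + a * y0 1 - c * y0' 1) / (c * lam + d) := by
    rw [eq_div_iff hcd]
    linarith [hbc11]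
  rw [e0'] at e1'
  have hF1 : (lam - lamn) ^ 2 *
      (-(a * d - b * c) * (y1 1 / (c * lam + d) - c * y0 1 / (c * lam + d) ^ 2)
        * (yn 1 / (c * lamn + d))) = F 1 := by
    simp only [hF]
    rw [e1', en', e0']
    have hcd2 : lam * c + d ≠ 0 := by rwa [mul_comm]
    have hcdn2 : lamn * c + d ≠ 0 := by rwa [mul_comm]
    field_simp
    ring
  have hsq : (lam - lamn) ^ 2 ≠ 0 := pow_ne_zero 2 hs
  apply mul_left_cancel₀ hsq
  rw [key, hF0, sub_zero, ← hF1]
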